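/- arXiv:2306.01758 — 2 statements merged into one kernel-verified Lean document; each statement's English description precedes it below -/
import Mathlib

section
/- Let Ω be a measurable space, μ a σ-finite measure on Ω, and f₁, f₂, g₁, g₂ ∈ L²(μ). If the complex measures f₁|f₁|dμ = g₁|g₁|dμ and f₂|f₂|dμ = g₂|g₂|dμ agree, then the complex measures (f₁+f₂)|f₁+f₂|dμ and (g₁+g₂)|g₁+g₂|dμ agree. -/
open MeasureTheory

/-!
Since `z‖z‖` has norm `‖z‖²`, the map `z ↦ z‖z‖` is injective, and for `f ∈ L²` the density
`f|f|` is integrable. Hence `f|f| dμ` determines `f` almost everywhere, and the claim reduces to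
the fact that a.e. equality is preserved by addition.
-/

/-- The complex measure `f|f| dμ`. -/
noncomputable def sqDen {Ω : Type*} [MeasurableSpace Ω] (μ : Measure Ω) (f : Ω → ℂ) :
    ComplexMeasure Ω :=
  μ.withDensityᵥ (fun x => f x * (‖f x‖ : ℂ))

theorem RCLike.mul_norm_injective {𝕜 : Type*} [RCLike 𝕜] :
    Function.Injective fun z : 𝕜 => z * (‖z‖ : 𝕜) := by
  intro z w (h : z * (‖z‖ : 𝕜) = w * (‖w‖ : 𝕜))
  have hnorm : ‖z‖ = ‖w‖ := by
    have := congrArg norm h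
    simp only [norm_mul, RCLike.norm_ofReal, abs_norm] at this
    exact (mul_self_inj (norm_nonneg _) (norm_nonneg _)).1 this
  rcases eq_or_ne ‖w‖ 0 with hw | hw
  · rw [norm_eq_zero.1 hw, norm_eq_zero.1 (hnorm.trans hw)]
  · rw [hnorm] at h
    exact mul_right_cancel₀ (RCLike.ofReal_ne_zero.2 hw) h

theorem MeasureTheory.MemLp.integrable_mul_norm {α 𝕜 : Type*} [MeasurableSpace α] [RCLike 𝕜]
    {μ : Measure α} {f : α → 𝕜} (hf : MemLp f 2 μ) :
    Integrable (fun x => f x * (‖f x‖ : 𝕜)) μ :=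
  hf.integrable_mul hf.norm.ofReal

theorem sqDen_eq_sqDen_iff {Ω : Type*} [MeasurableSpace Ω] {μ : Measure Ω} {f g : Ω → ℂ}
    (hf : MemLp f 2 μ) (hg : MemLp g 2 μ) : sqDen μ f = sqDen μ g ↔ f =ᵐ[μ] g := by
  refine (hf.integrable_mul_norm.withDensityᵥ_eq_iff hg.integrable_mul_norm).trans ⟨?_, ?_⟩
  · exact fun h => h.mono fun x hx => RCLike.mul_norm_injective hx
  · exact fun h => h.mono fun x hx => by simp only [hx]

theorem sqDen_add_well_defined_general {Ω : Type*} [MeasurableSpace Ω]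
    (μ : Measure Ω) (f₁ f₂ g₁ g₂ : Ω → ℂ)
    (hf₁ : MemLp f₁ 2 μ) (hf₂ : MemLp f₂ 2 μ) (hg₁ : MemLp g₁ 2 μ) (hg₂ : MemLp g₂ 2 μ)
    (h₁ : sqDen μ f₁ = sqDen μ g₁) (h₂ : sqDen μ f₂ = sqDen μ g₂) :
    sqDen μ (f₁ + f₂) = sqDen μ (g₁ + g₂) := by
  rw [sqDen_eq_sqDen_iff hf₁ hg₁] at h₁
  rw [sqDen_eq_sqDen_iff hf₂ hg₂] at h₂
  rw [sqDen_eq_sqDen_iff (hf₁.add hf₂) (hg₁.add hg₂)]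
  exact h₁.add h₂

/-- if f₁|f₁|dμ = g₁|g₁|dμ and f₂|f₂|dμ = g₂|g₂|dμ then
(f₁+f₂)|f₁+f₂|dμ = (g₁+g₂)|g₁+g₂|dμ. -/
theorem sqDen_add_well_defined {Ω : Type*} [MeasurableSpace Ω]
    (μ : Measure Ω) (hμ : SigmaFinite μ) (f₁ f₂ g₁ g₂ : Ω → ℂ)
    (hf₁ : MemLp f₁ 2 μ) (hf₂ : MemLp f₂ 2 μ) (hg₁ : MemLp g₁ 2 μ) (hg₂ : MemLp g₂ 2 μ)
    (h₁ : sqDen μ f₁ = sqDen μ g₁) (h₂ : sqDen μ f₂ = sqDen μ g₂) :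
    sqDen μ (f₁ + f₂) = sqDen μ (g₁ + g₂) :=
  sqDen_add_well_defined_general μ f₁ f₂ g₁ g₂ hf₁ hf₂ hg₁ hg₂ h₁ h₂
end

section
/- For every Cauchy sequence (u_n) of complex measures on a measurable space Ω with respect to the CM(Ω) norm, there exists a finite measure ν and a sequence (f_n) in L²(ν) with u_n = f_n|f_n|dν for all n, and the sequence (f_n) is Cauchy in L²(ν); consequently (u_n) converges in CM(Ω) to g|g|dν where g is the L²(ν)-limit of (f_n). -/
open MeasureTheory Complex Filter Topology

structure CMSpace (Ω : Type*) [MeasurableSpace Ω] where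
  add : ComplexMeasure Ω → ComplexMeasure Ω → ComplexMeasure Ω
  smul : ℂ → ComplexMeasure Ω → ComplexMeasure Ω
  inner : ComplexMeasure Ω → ComplexMeasure Ω → ℂ
  add_repr : ∀ (μ : Measure Ω), SigmaFinite μ → ∀ f g : Ω → ℂ,
      MemLp f 2 μ → MemLp g 2 μ →
      add (sqDen μ f) (sqDen μ g) = sqDen μ (f + g)
  smul_repr : ∀ (μ : Measure Ω), SigmaFinite μ → ∀ (c : ℂ) (f : Ω → ℂ),
      MemLp f 2 μ → smul c (sqDen μ f) = sqDen μ (c • f)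
  inner_repr : ∀ (μ : Measure Ω), SigmaFinite μ → ∀ f g : Ω → ℂ,
      MemLp f 2 μ → MemLp g 2 μ →
      inner (sqDen μ f) (sqDen μ g) = ∫ x, f x * (starRingEnd ℂ) (g x) ∂μ
  add_assoc : ∀ u v w, add (add u v) w = add u (add v w)
  add_comm : ∀ u v, add u v = add v u
  add_zero : ∀ u, add u 0 = u
  neg_add : ∀ u, add (smul (-1) u) u = 0
  one_smul : ∀ u, smul 1 u = u
  mul_smul : ∀ c d u, smul (c * d) u = smul c (smul d u)
  smul_add : ∀ c u v, smul c (add u v) = add (smul c u) (smul c v)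
  add_smul : ∀ c d u, smul (c + d) u = add (smul c u) (smul d u)
  inner_conj_symm : ∀ u v, (starRingEnd ℂ) (inner u v) = inner v u
  inner_add_left : ∀ u v w, inner (add u v) w = inner u w + inner v w
  inner_smul_left : ∀ c u v, inner (smul c u) v = (starRingEnd ℂ) c * inner u v
  inner_self_nonneg : ∀ u, 0 ≤ (inner u u).re ∧ (inner u u).im = 0
  inner_self_eq_zero : ∀ u, inner u u = 0 → u = 0
  complete : ∀ u : ℕ → ComplexMeasure Ω,
    (∀ ε > 0, ∃ N, ∀ m ≥ N, ∀ n ≥ N,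
      Real.sqrt (inner (add (u m) (smul (-1) (u n))) (add (u m) (smul (-1) (u n)))).re < ε) →
    ∃ v, Tendsto
      (fun n => Real.sqrt (inner (add (u n) (smul (-1) v)) (add (u n) (smul (-1) v))).re)
      atTop (nhds 0)

noncomputable def CMSpace.nrm {Ω : Type*} [MeasurableSpace Ω] (C : CMSpace Ω)
    (u : ComplexMeasure Ω) : ℝ := Real.sqrt (C.inner u u).re

noncomputable def CMSpace.sub {Ω : Type*} [MeasurableSpace Ω] (C : CMSpace Ω)
    (u v : ComplexMeasure Ω) : ComplexMeasure Ω := C.add u (C.smul (-1) v)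

/-! Countably many complex measures are absolutely continuous with respect to a single finite
measure `ν`, namely a finite measure with the same null sets as `∑ₙ (|Re uₙ| + |Im uₙ|)`.
If `h` is the Radon–Nikodym derivative of `uₙ` with respect to `ν`, then `fₙ = h / √|h|` lies
in `L²(ν)` and `fₙ |fₙ| = h`. The axioms of `CMSpace` make `f ↦ f |f| dν` an isometry from
`L²(ν)`, so `(fₙ)` is Cauchy in the complete space `L²(ν)`, and its limit `g` yields the limit
`g |g| dν` of `(uₙ)`. -/

namespace MeasureTheory.ComplexMeasure

variable {Ω : Type*} [MeasurableSpace Ω]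

theorem exists_isFiniteMeasure_absolutelyContinuous {ι : Type*} [Countable ι]
    (u : ι → ComplexMeasure Ω) :
    ∃ ν : Measure Ω, IsFiniteMeasure ν ∧ ∀ i, u i ≪ᵥ ν.toENNRealVectorMeasure := by
  set ν₀ := Measure.sum (fun i => (u i).re.totalVariation) +
    Measure.sum (fun i => (u i).im.totalVariation)
  refine ⟨ν₀.toFinite, inferInstance, fun i => ?_⟩
  have hν₀ : ν₀ ≪ ν₀.toFinite.toENNRealVectorMeasure.ennrealToMeasure := by
    rw [VectorMeasure.ennrealToMeasure_toENNRealVectorMeasure]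
    exact absolutelyContinuous_toFinite ν₀
  rw [absolutelyContinuous_ennreal_iff, SignedMeasure.absolutelyContinuous_ennreal_iff,
    SignedMeasure.absolutelyContinuous_ennreal_iff]
  have hre : (u i).re.totalVariation ≪ ν₀ :=
    (Measure.le_sum _ i).absolutelyContinuous.add_right _
  have him : (u i).im.totalVariation ≪ ν₀ :=
    (Measure.le_sum _ i).absolutelyContinuous.add_right' _
  exact ⟨hre.trans hν₀, him.trans hν₀⟩

theorem withDensityᵥ_rnDeriv_eq (c : ComplexMeasure Ω) (μ : Measure Ω) [SigmaFinite μ]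
    (h : c ≪ᵥ μ.toENNRealVectorMeasure) : μ.withDensityᵥ (c.rnDeriv μ) = c := by
  obtain ⟨hre, him⟩ := (absolutelyContinuous_ennreal_iff c _).1 h
  have : c.HaveLebesgueDecomposition μ := ⟨inferInstance, inferInstance⟩
  have hsing (s : SignedMeasure Ω) (hs : s ≪ᵥ μ.toENNRealVectorMeasure) :
      s.singularPart μ = 0 := by
    have := s.singularPart_add_withDensity_rnDeriv_eq (μ := μ)
    rwa [SignedMeasure.withDensityᵥ_rnDeriv_eq s μ hs, add_eq_right] at this
  conv_rhs => rw [← c.singularPart_add_withDensity_rnDeriv_eq (μ := μ)]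
  have hzero : SignedMeasure.toComplexMeasure (0 : SignedMeasure Ω) 0 = 0 := by
    ext s hs
    simp [SignedMeasure.toComplexMeasure_apply, Complex.ext_iff]
  rw [singularPart, hsing _ hre, hsing _ him, hzero, zero_add]

end MeasureTheory.ComplexMeasure

namespace Complex

theorem norm_div_sqrt_norm (z : ℂ) : ‖z / (√‖z‖ : ℂ)‖ = √‖z‖ := by
  rcases eq_or_ne z 0 with rfl | hz
  · simp
  have hpos : 0 < √‖z‖ := Real.sqrt_pos.2 (norm_pos_iff.2 hz)
  rw [norm_div, norm_real, Real.norm_of_nonneg hpos.le, div_eq_iff hpos.ne',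
    Real.mul_self_sqrt (norm_nonneg z)]

theorem div_sqrt_norm_mul_norm (z : ℂ) : z / (√‖z‖ : ℂ) * ‖z / (√‖z‖ : ℂ)‖ = z := by
  rcases eq_or_ne z 0 with rfl | hz
  · simp
  have hne : (√‖z‖ : ℂ) ≠ 0 := ofReal_ne_zero.2 (Real.sqrt_pos.2 (norm_pos_iff.2 hz)).ne'
  rw [norm_div_sqrt_norm, div_mul_cancel₀ z hne]

end Complex

section SquareRootDensity

variable {Ω : Type*} [MeasurableSpace Ω] {ν : Measure Ω}

theorem sqDen_div_sqrt_norm (h : Ω → ℂ) :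
    sqDen ν (fun x => h x / (√‖h x‖ : ℂ)) = ν.withDensityᵥ h := by
  simp only [sqDen, Complex.div_sqrt_norm_mul_norm]

theorem MeasureTheory.Integrable.memLp_two_div_sqrt_norm {h : Ω → ℂ} (hh : Integrable h ν) :
    MemLp (fun x => h x / (√‖h x‖ : ℂ)) 2 ν := by
  have hmeas : Measurable fun z : ℂ => z / (√‖z‖ : ℂ) := by fun_prop
  have hae : AEStronglyMeasurable (fun x => h x / (√‖h x‖ : ℂ)) ν :=
    (hmeas.comp_aemeasurable hh.aemeasurable).aestronglyMeasurable
  rw [memLp_two_iff_integrable_sq_norm hae]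
  simp only [Complex.norm_div_sqrt_norm, Real.sq_sqrt (norm_nonneg _)]
  exact hh.norm

theorem MeasureTheory.ComplexMeasure.exists_memLp_two_sqDen_eq [SigmaFinite ν]
    (c : ComplexMeasure Ω) (hc : c ≪ᵥ ν.toENNRealVectorMeasure) :
    ∃ f : Ω → ℂ, MemLp f 2 ν ∧ sqDen ν f = c :=
  ⟨_, (c.integrable_rnDeriv ν).memLp_two_div_sqrt_norm,
    (sqDen_div_sqrt_norm _).trans (c.withDensityᵥ_rnDeriv_eq ν hc)⟩

end SquareRootDensity

open scoped InnerProductSpace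

namespace CMSpace

variable {Ω : Type*} [MeasurableSpace Ω] (C : CMSpace Ω) {ν : Measure Ω} [SigmaFinite ν]
  {f g : Ω → ℂ}

theorem sub_sqDen (hf : MemLp f 2 ν) (hg : MemLp g 2 ν) :
    C.sub (sqDen ν f) (sqDen ν g) = sqDen ν (f - g) := by
  rw [CMSpace.sub, C.smul_repr ν ‹_› (-1) g hg,
    C.add_repr ν ‹_› f ((-1 : ℂ) • g) hf (hg.const_smul _), neg_one_smul, ← sub_eq_add_neg]

theorem inner_sqDen (hf : MemLp f 2 ν) (hg : MemLp g 2 ν) :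
    C.inner (sqDen ν f) (sqDen ν g) = ⟪hg.toLp g, hf.toLp f⟫_ℂ := by
  rw [C.inner_repr ν ‹_› f g hf hg, L2.inner_def]
  refine integral_congr_ae ?_
  filter_upwards [hf.coeFn_toLp, hg.coeFn_toLp] with x hfx hgx
  rw [hfx, hgx, RCLike.inner_apply, mul_comm]

theorem nrm_sqDen (hf : MemLp f 2 ν) : C.nrm (sqDen ν f) = ‖hf.toLp f‖ := by
  rw [CMSpace.nrm, C.inner_sqDen hf hf, norm_eq_sqrt_re_inner (𝕜 := ℂ), RCLike.re_eq_complex_re]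

theorem nrm_sub_sqDen (hf : MemLp f 2 ν) (hg : MemLp g 2 ν) :
    C.nrm (C.sub (sqDen ν f) (sqDen ν g)) = dist (hf.toLp f) (hg.toLp g) := by
  rw [C.sub_sqDen hf hg, C.nrm_sqDen (hf.sub hg), dist_eq_norm, MemLp.toLp_sub]

end CMSpace

/-- every CM-Cauchy sequence of complex measures can be represented by a
Cauchy sequence of square-root densities in L²(ν) for a common finite measure ν, and it
converges in CM(Ω) to g|g|dν where g is the L²(ν)-limit. -/
theorem cauchy_CM_representation {Ω : Type*} [MeasurableSpace Ω] (C : CMSpace Ω)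
    (u : ℕ → ComplexMeasure Ω)
    (hCauchy : ∀ ε > (0 : ℝ), ∃ N, ∀ m ≥ N, ∀ n ≥ N, C.nrm (C.sub (u m) (u n)) < ε) :
    ∃ ν : Measure Ω, IsFiniteMeasure ν ∧ ∃ f : ℕ → Ω → ℂ,
      (∀ n, MemLp (f n) 2 ν) ∧ (∀ n, u n = sqDen ν (f n)) ∧
      (∀ ε > (0 : ℝ), ∃ N, ∀ m ≥ N, ∀ n ≥ N,
        eLpNorm (f m - f n) 2 ν < ENNReal.ofReal ε) ∧
      ∃ g : Ω → ℂ, MemLp g 2 ν ∧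
        Filter.Tendsto (fun n => eLpNorm (f n - g) 2 ν) Filter.atTop (nhds 0) ∧
        Filter.Tendsto (fun n => C.nrm (C.sub (u n) (sqDen ν g))) Filter.atTop (nhds 0) := by
  obtain ⟨ν, hν, hac⟩ := ComplexMeasure.exists_isFiniteMeasure_absolutelyContinuous u
  choose f hf hfu using fun n => ComplexMeasure.exists_memLp_two_sqDen_eq (u n) (hac n)
  set F : ℕ → Lp ℂ 2 ν := fun n => (hf n).toLp (f n)
  have hdist (m n : ℕ) : dist (F m) (F n) = C.nrm (C.sub (u m) (u n)) := by
    rw [← hfu m, ← hfu n, C.nrm_sub_sqDen]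
  have hCauchyF (ε : ℝ) (hε : 0 < ε) : ∃ N, ∀ m ≥ N, ∀ n ≥ N, dist (F m) (F n) < ε := by
    simpa only [hdist] using hCauchy ε hε
  obtain ⟨G, hG⟩ := cauchySeq_tendsto_of_complete (Metric.cauchySeq_iff.2 hCauchyF)
  have hGG : (Lp.memLp G).toLp G = G := Lp.toLp_coeFn G (Lp.memLp G)
  refine ⟨ν, hν, f, hf, fun n => (hfu n).symm, fun ε hε => ?_, G, Lp.memLp G, ?_, ?_⟩
  · simpa only [← Lp.edist_toLp_toLp _ _ (hf _) (hf _), edist_lt_ofReal] using hCauchyF ε hε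
  · simpa only [← Lp.edist_toLp_toLp _ _ (hf _) (Lp.memLp G), hGG] using
      tendsto_iff_edist_tendsto_0.1 hG
  · simpa only [← hfu, C.nrm_sub_sqDen (hf _) (Lp.memLp G), hGG] using
      tendsto_iff_dist_tendsto_zero.1 hG
end
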